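/- arXiv:1809.01298 — 3 statements merged into one kernel-verified Lean document; each statement's English description precedes it below -/
import Mathlib

section
/- Let a > 1 be a real number. Then sup over y ∈ (0,1] of the integral from x = y^{1/a}/2 to x = 2·y^{1/a} of |y − x^a|^{−1/a} dx is finite. Moreover, after the change of variables x = y^{1/a}·u, this supremum equals the finite integral from u = 1/2 to u = 2 of |1 − u^a|^{−1/a} du. -/
open MeasureTheory

theorem damping_integral_change_of_variables (a : ℝ) (ha : 1 < a) :
    IntervalIntegrable (fun u : ℝ => |1 - u ^ a| ^ (-1 / a)) volume (1 / 2) 2 ∧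
    ∀ y ∈ Set.Ioc (0 : ℝ) 1,
      (∫ x in (y ^ (1 / a) / 2)..(2 * y ^ (1 / a)), |y - x ^ a| ^ (-1 / a)) =
        ∫ u in (1 / 2 : ℝ)..2, |1 - u ^ a| ^ (-1 / a) := by
  have ha0 : (0 : ℝ) < a := by linarith
  set r : ℝ := -1 / a with hrdef
  have hr : (-1 : ℝ) < r := by
    rw [hrdef, neg_div, neg_lt_neg_iff, div_lt_one ha0]; exact ha
  have hr0 : r ≤ 0 := by
    rw [hrdef, neg_div]
    exact neg_nonpos.mpr (by positivity)
  have hM : Measurable (fun u : ℝ => |1 - u ^ a| ^ r) := by measurability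
  have key : IntervalIntegrable (fun u : ℝ => |1 - u ^ a| ^ r) volume (1 / 2) 2 := by
    have h1 : IntervalIntegrable (fun u : ℝ => |1 - u ^ a| ^ r) volume (1/2) 1 := by
      have hg : IntervalIntegrable (fun u : ℝ => (1 - u) ^ r) volume (1/2) 1 := by
        have := (intervalIntegral.intervalIntegrable_rpow' (a := 0) (b := 1/2) hr).comp_sub_left 1
        norm_num at this
        exact this.symm
      refine hg.mono_fun hM.aestronglyMeasurable.restrict ?_
      refine MeasureTheory.ae_restrict_of_forall_mem measurableSet_uIoc ?_
      intro u hu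
      rw [Set.uIoc_of_le (by norm_num : (1:ℝ)/2 ≤ 1)] at hu
      have hu0 : (0 : ℝ) < u := lt_trans (by norm_num) hu.1
      have hua : u ^ a ≤ u := by
        calc u ^ a ≤ u ^ (1:ℝ) := Real.rpow_le_rpow_of_exponent_ge hu0 hu.2 ha.le
        _ = u := Real.rpow_one u
      have habs : |1 - u ^ a| = 1 - u ^ a := abs_of_nonneg (by linarith [hu.2])
      simp only [Real.norm_eq_abs, habs]
      rw [abs_of_nonneg (Real.rpow_nonneg (by linarith [hu.2]) r),
        abs_of_nonneg (Real.rpow_nonneg (by linarith [hu.2] : (0:ℝ) ≤ 1 - u) r)]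
      rcases eq_or_lt_of_le hu.2 with h | h
      · subst h; simp [Real.one_rpow]
      · exact Real.rpow_le_rpow_of_nonpos (by linarith) (by linarith) hr0
    have h2 : IntervalIntegrable (fun u : ℝ => |1 - u ^ a| ^ r) volume 1 2 := by
      have hg : IntervalIntegrable (fun u : ℝ => (u - 1) ^ r) volume 1 2 := by
        have := (intervalIntegral.intervalIntegrable_rpow' (a := 0) (b := 1) hr).comp_sub_right 1
        norm_num at this
        exact this
      refine hg.mono_fun hM.aestronglyMeasurable.restrict ?_
      refine MeasureTheory.ae_restrict_of_forall_mem measurableSet_uIoc ?_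
      intro u hu
      rw [Set.uIoc_of_le (by norm_num : (1:ℝ) ≤ 2)] at hu
      have hu1 : (1 : ℝ) < u := hu.1
      have hua : u ≤ u ^ a := by
        calc u = u ^ (1:ℝ) := (Real.rpow_one u).symm
        _ ≤ u ^ a := Real.rpow_le_rpow_of_exponent_le hu1.le ha.le
      have habs : |1 - u ^ a| = u ^ a - 1 := by
        rw [abs_sub_comm]; exact abs_of_nonneg (by linarith)
      simp only [Real.norm_eq_abs, habs]
      rw [abs_of_nonneg (Real.rpow_nonneg (by linarith) r),
        abs_of_nonneg (Real.rpow_nonneg (by linarith : (0:ℝ) ≤ u - 1) r)]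
      exact Real.rpow_le_rpow_of_nonpos (by linarith) (by linarith) hr0
    exact h1.trans h2
  refine ⟨key, ?_⟩
  rintro y ⟨hy0, hy1⟩
  set c : ℝ := y ^ (1 / a) with hcdef
  have hc0 : 0 < c := Real.rpow_pos_of_pos hy0 _
  have hca : c ^ a = y := by
    rw [hcdef, ← Real.rpow_mul hy0.le, one_div_mul_cancel (ne_of_gt ha0), Real.rpow_one]
  have hcomp : ∀ u ∈ Set.uIcc (1/2 : ℝ) 2,
      |y - (c * u) ^ a| ^ r = y ^ r * |1 - u ^ a| ^ r := by
    intro u hu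
    rw [Set.uIcc_of_le (by norm_num : (1:ℝ)/2 ≤ 2)] at hu
    have hu0 : (0 : ℝ) ≤ u := le_trans (by norm_num) hu.1
    rw [Real.mul_rpow hc0.le hu0, hca]
    have h1 : y - y * u ^ a = y * (1 - u ^ a) := by ring
    rw [h1, abs_mul, abs_of_pos hy0, Real.mul_rpow hy0.le (abs_nonneg _)]
  have hchg : (∫ u in (1/2 : ℝ)..2, |y - (c * u) ^ a| ^ r)
      = c⁻¹ • ∫ x in (c * (1/2))..(c * 2), |y - x ^ a| ^ r :=
    intervalIntegral.integral_comp_mul_left (fun x => |y - x ^ a| ^ r) (ne_of_gt hc0)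
  have hcongr : (∫ u in (1/2 : ℝ)..2, |y - (c * u) ^ a| ^ r)
      = y ^ r * ∫ u in (1/2 : ℝ)..2, |1 - u ^ a| ^ r := by
    rw [← intervalIntegral.integral_const_mul]
    exact intervalIntegral.integral_congr fun u hu => by rw [hcomp u hu]
  have hkey : c⁻¹ • (∫ x in (c / 2)..(2 * c), |y - x ^ a| ^ r)
      = y ^ r * ∫ u in (1/2 : ℝ)..2, |1 - u ^ a| ^ r := by
    have e1 : c / 2 = c * (1/2) := by ring
    have e2 : 2 * c = c * 2 := by ring
    rw [e1, e2, ← hchg, hcongr]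
  have hfin : (∫ x in (c / 2)..(2 * c), |y - x ^ a| ^ r)
      = (c * y ^ r) * ∫ u in (1/2 : ℝ)..2, |1 - u ^ a| ^ r := by
    have h2 := congrArg (fun t => c * t) hkey
    simp only [smul_eq_mul, ← mul_assoc, mul_inv_cancel₀ (ne_of_gt hc0), one_mul] at h2
    linarith [h2]
  have hcy : c * y ^ r = 1 := by
    rw [hcdef, hrdef, ← Real.rpow_add hy0, neg_div]
    have h3 : 1 / a + -(1 / a) = 0 := by ring
    rw [h3, Real.rpow_zero]
  rw [hfin, hcy, one_mul]
end

section
/- Let λ ∈ ℝ, let S : ℝ² → ℝ be C² with |∂_x∂_y S| ≤ M on [x₀ − R, x₀ + R] × I for a bounded interval I ⊆ ℝ with center c, and let a ∈ L^∞(ℝ) be supported in I with ∫_I exp(iλ·S(x₀, y))·a(y) dy = 0. Then for every x ∈ [x₀ − R, x₀ + R], |∫_I exp(iλ·S(x,y))·a(y) dy| ≤ |λ|·M·|x − x₀|·|I|·‖a‖_{L¹}, where |I| is the length of I. -/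
/-!
Factor out `exp (i λ S(x, c))` so that only the phase `S(x, y) - S(x, c)` remains. Its analogue at
`x₀` has vanishing integral against `a`, so it may be subtracted, and the exponentials then differ
by at most `|λ|` times the mixed difference `S(x, y) - S(x, c) - S(x₀, y) + S(x₀, c)`. Two
applications of the mean value theorem bound that by `M |x - x₀| |y - c|`.
-/

open MeasureTheory Complex Function Set

theorem norm_cexp_I_mul_sub_cexp_I_mul_le (u v : ℝ) :
    ‖exp (I * u) - exp (I * v)‖ ≤ |u - v| := by
  have : exp (I * u) - exp (I * v) = exp (I * v) * (exp (I * ↑(u - v)) - 1) := by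
    rw [mul_sub, ← exp_add]; push_cast; ring_nf
  rw [this, norm_mul, norm_exp_I_mul_ofReal, one_mul, ← Real.norm_eq_abs]
  exact Real.norm_exp_I_mul_ofReal_sub_one_le

section PhaseIntegral

variable {α : Type*} [MeasurableSpace α] {μ : Measure α} {a : α → ℂ}

theorem integral_cexp_I_mul_sub_const_mul (φ : α → ℝ) (φ₀ : ℝ) :
    ∫ y, exp (I * ↑(φ y - φ₀)) * a y ∂μ = exp (-(I * φ₀)) * ∫ y, exp (I * φ y) * a y ∂μ := by
  rw [← integral_const_mul]
  congr 1 with y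
  rw [← mul_assoc, ← exp_add]
  push_cast
  ring_nf

theorem norm_integral_cexp_I_mul_sub_const_mul (φ : α → ℝ) (φ₀ : ℝ) :
    ‖∫ y, exp (I * ↑(φ y - φ₀)) * a y ∂μ‖ = ‖∫ y, exp (I * φ y) * a y ∂μ‖ := by
  rw [integral_cexp_I_mul_sub_const_mul, norm_mul, ← mul_neg, ← ofReal_neg,
    norm_exp_I_mul_ofReal, one_mul]

theorem MeasureTheory.Integrable.cexp_I_mul_mul (ha : Integrable a μ) {φ : α → ℝ}
    (hφ : Measurable φ) :
    Integrable (fun y => exp (I * φ y) * a y) μ :=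
  ha.bdd_mul (c := 1) (by fun_prop) (.of_forall fun y => (norm_exp_I_mul_ofReal _).le)

theorem norm_integral_cexp_I_mul_le_of_integral_eq_zero (ha : Integrable a μ)
    {φ ψ : α → ℝ} (hφ : Measurable φ) (hψ : Measurable ψ)
    (hcanc : ∫ y, exp (I * ψ y) * a y ∂μ = 0) {K : ℝ} (hK : ∀ᵐ y ∂μ, |φ y - ψ y| ≤ K) :
    ‖∫ y, exp (I * φ y) * a y ∂μ‖ ≤ K * ∫ y, ‖a y‖ ∂μ := by
  have hdiff : ∫ y, exp (I * φ y) * a y ∂μ = ∫ y, (exp (I * φ y) - exp (I * ψ y)) * a y ∂μ := by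
    simp_rw [sub_mul]
    rw [integral_sub (ha.cexp_I_mul_mul hφ) (ha.cexp_I_mul_mul hψ), hcanc, sub_zero]
  rw [hdiff, ← integral_const_mul]
  refine norm_integral_le_of_norm_le (ha.norm.const_mul K) ?_
  filter_upwards [hK] with y hy
  rw [norm_mul]
  exact mul_le_mul_of_nonneg_right ((norm_cexp_I_mul_sub_cexp_I_mul_le _ _).trans hy)
    (norm_nonneg _)

theorem norm_integral_cexp_I_mul_le_of_integral_eq_zero' (ha : Integrable a μ)
    {φ ψ : α → ℝ} (hφ : Measurable φ) (hψ : Measurable ψ)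
    (hcanc : ∫ y, exp (I * ψ y) * a y ∂μ = 0) (φ₀ ψ₀ : ℝ) {K : ℝ}
    (hK : ∀ᵐ y ∂μ, |(φ y - φ₀) - (ψ y - ψ₀)| ≤ K) :
    ‖∫ y, exp (I * φ y) * a y ∂μ‖ ≤ K * ∫ y, ‖a y‖ ∂μ := by
  rw [← norm_integral_cexp_I_mul_sub_const_mul φ φ₀]
  refine norm_integral_cexp_I_mul_le_of_integral_eq_zero ha (by fun_prop) (by fun_prop) ?_ hK
  rw [integral_cexp_I_mul_sub_const_mul, hcanc, mul_zero]

end PhaseIntegral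

section MixedDifference

variable {S : ℝ → ℝ → ℝ}

theorem differentiable_deriv_apply_of_contDiff_uncurry (hS : ContDiff ℝ 2 (uncurry S)) (y : ℝ) :
    Differentiable ℝ (fun t => deriv (S t) y) := by
  have hpartial : ∀ t, deriv (S t) y = fderiv ℝ (uncurry S) (t, y) (0, 1) := fun t =>
    ((hS.differentiable two_ne_zero (t, y)).hasFDerivAt.comp_hasDerivAt y
      ((hasDerivAt_const y t).prodMk (hasDerivAt_id y))).deriv
  simp_rw [hpartial]
  have hfderiv : Differentiable ℝ (fderiv ℝ (uncurry S)) :=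
    (hS.fderiv_right (m := 1) le_rfl).differentiable one_ne_zero
  fun_prop

theorem abs_sub_sub_sub_le_of_abs_deriv_deriv_le (hS : ContDiff ℝ 2 (uncurry S))
    {s t : Set ℝ} (hs : Convex ℝ s) (ht : Convex ℝ t) {M : ℝ}
    (hM : ∀ p ∈ s ×ˢ t, |deriv (fun x' => deriv (S x') p.2) p.1| ≤ M)
    {x x₀ y c : ℝ} (hx : x ∈ s) (hx₀ : x₀ ∈ s) (hy : y ∈ t) (hc : c ∈ t) :
    |S x y - S x c - (S x₀ y - S x₀ c)| ≤ M * |x - x₀| * |y - c| := by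
  have hdiffS : ∀ t', Differentiable ℝ (S t') := fun t' =>
    (hS.differentiable two_ne_zero).comp (differentiable_const t' |>.prodMk differentiable_id)
  have hderiv : ∀ y' ∈ t, |deriv (S x - S x₀) y'| ≤ M * |x - x₀| := fun y' hy' => by
    rw [deriv_sub (hdiffS x y') (hdiffS x₀ y')]
    exact hs.norm_image_sub_le_of_norm_deriv_le
      (fun t' _ => differentiable_deriv_apply_of_contDiff_uncurry hS y' t')
      (fun t' ht' => hM (t', y') ⟨ht', hy'⟩) hx₀ hx
  have hmvt := ht.norm_image_sub_le_of_norm_deriv_le (fun y' _ => ((hdiffS x).sub (hdiffS x₀)) y')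
    hderiv hc hy
  simp only [Pi.sub_apply, Real.norm_eq_abs] at hmvt
  calc |S x y - S x c - (S x₀ y - S x₀ c)| = |S x y - S x₀ y - (S x c - S x₀ c)| := by
        congr 1; ring
    _ ≤ M * |x - x₀| * |y - c| := hmvt

end MixedDifference

theorem atom_cancellation_estimate_general (S : ℝ → ℝ → ℝ)
    (hS : ContDiff ℝ 2 (fun p : ℝ × ℝ => S p.1 p.2))
    (lam M x₀ R c δ : ℝ)
    (a : ℝ → ℂ) (hameas : Measurable a)
    (habd : ∃ Cb : ℝ, ∀ y, ‖a y‖ ≤ Cb)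
    (hsupp : ∀ y, y ∉ Set.Icc (c - δ) (c + δ) → a y = 0)
    (hM : ∀ p ∈ Set.Icc (x₀ - R) (x₀ + R) ×ˢ Set.Icc (c - δ) (c + δ),
      |deriv (fun x' => deriv (fun y' => S x' y') p.2) p.1| ≤ M)
    (hcanc : (∫ y in Set.Icc (c - δ) (c + δ),
      Complex.exp (Complex.I * (lam : ℂ) * ((S x₀ y : ℝ) : ℂ)) * a y) = 0) :
    ∀ x ∈ Set.Icc (x₀ - R) (x₀ + R),
      ‖∫ y in Set.Icc (c - δ) (c + δ),
          Complex.exp (Complex.I * (lam : ℂ) * ((S x y : ℝ) : ℂ)) * a y‖ ≤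
        |lam| * M * |x - x₀| * (2 * δ) * ∫ y, ‖a y‖ := by
  intro x hx
  obtain ⟨Cb, hCb⟩ := habd
  have ha : IntegrableOn a (Icc (c - δ) (c + δ)) :=
    Measure.integrableOn_of_bounded measure_Icc_lt_top.ne hameas.aestronglyMeasurable
      (.of_forall hCb)
  have hmeas : ∀ t, Measurable fun y => lam * S t y := fun t =>
    (hS.continuous.comp (.prodMk_right t)).measurable.const_mul lam
  have hphase : ∀ t y, I * lam * S t y = I * ↑(lam * S t y) := by
    intro t y; push_cast; ring
  simp_rw [hphase] at hcanc ⊢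
  rw [← setIntegral_eq_integral_of_forall_compl_eq_zero (f := fun y => ‖a y‖)
    fun y hy => by simp [hsupp y hy]]
  refine norm_integral_cexp_I_mul_le_of_integral_eq_zero' ha (hmeas x) (hmeas x₀) hcanc
    (lam * S x c) (lam * S x₀ c) (ae_restrict_of_forall_mem measurableSet_Icc fun y hy => ?_)
  have hx₀ : x₀ ∈ Icc (x₀ - R) (x₀ + R) := ⟨by linarith [hx.1, hx.2], by linarith [hx.1, hx.2]⟩
  have hc : c ∈ Icc (c - δ) (c + δ) := ⟨by linarith [hy.1, hy.2], by linarith [hy.1, hy.2]⟩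
  have hM₀ : 0 ≤ M := (abs_nonneg _).trans (hM (x, y) ⟨hx, hy⟩)
  have hyc : |y - c| ≤ 2 * δ :=
    abs_sub_le_iff.2 ⟨by linarith [hy.1, hy.2], by linarith [hy.1, hy.2]⟩
  calc |lam * S x y - lam * S x c - (lam * S x₀ y - lam * S x₀ c)|
      = |lam| * |S x y - S x c - (S x₀ y - S x₀ c)| := by rw [← abs_mul]; congr 1; ring
    _ ≤ |lam| * (M * |x - x₀| * |y - c|) := by
      gcongr
      exact abs_sub_sub_sub_le_of_abs_deriv_deriv_le hS (convex_Icc _ _) (convex_Icc _ _) hM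
        hx hx₀ hy hc
    _ ≤ |lam| * M * |x - x₀| * (2 * δ) := by
      rw [mul_assoc |lam|, mul_assoc |lam|]
      gcongr

theorem atom_cancellation_estimate (S : ℝ → ℝ → ℝ)
    (hS : ContDiff ℝ 2 (fun p : ℝ × ℝ => S p.1 p.2))
    (lam M x₀ R c δ : ℝ) (hR : 0 < R) (hδ : 0 < δ)
    (a : ℝ → ℂ) (hameas : Measurable a)
    (habd : ∃ Cb : ℝ, ∀ y, ‖a y‖ ≤ Cb)
    (hsupp : ∀ y, y ∉ Set.Icc (c - δ) (c + δ) → a y = 0)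
    (hM : ∀ p ∈ Set.Icc (x₀ - R) (x₀ + R) ×ˢ Set.Icc (c - δ) (c + δ),
      |deriv (fun x' => deriv (fun y' => S x' y') p.2) p.1| ≤ M)
    (hcanc : (∫ y in Set.Icc (c - δ) (c + δ),
      Complex.exp (Complex.I * (lam : ℂ) * ((S x₀ y : ℝ) : ℂ)) * a y) = 0) :
    ∀ x ∈ Set.Icc (x₀ - R) (x₀ + R),
      ‖∫ y in Set.Icc (c - δ) (c + δ),
          Complex.exp (Complex.I * (lam : ℂ) * ((S x y : ℝ) : ℂ)) * a y‖ ≤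
        |lam| * M * |x - x₀| * (2 * δ) * ∫ y, ‖a y‖ :=
  atom_cancellation_estimate_general S hS lam M x₀ R c δ a hameas habd hsupp hM hcanc
end

section
/- Let a > 0 and suppose Φ : J → ℝ is n-times continuously differentiable on an interval J of length δ > 0, with |Φ(t)| ≥ c > 0 for all t ∈ J and |Φ^{(j)}(t)| ≤ K·c·δ^{−j} for all t ∈ J and 1 ≤ j ≤ n, for some constant K ≥ 1. Then there exists a constant C = C(n, K) such that |(1/Φ)^{(n)}(t)| ≤ C·c^{−1}·δ^{−n} for all t ∈ J. -/
/-!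
Normalising `f` by the constant `(f x)⁻¹` reduces to `1 ≤ ‖f x‖`. Then `(1/f)⁽ⁿ⁾ = (inv ∘ f)⁽ⁿ⁾`
is controlled by the Faà di Bruno bound `norm_iteratedFDerivWithin_comp_le`: the derivatives
`(-1)ⁱ i! y⁻¹⁻ⁱ` of `inv` are at most `i!` on `1 ≤ ‖y‖`, and those of `f` are at most `Dⁱ`.
With `D = K/δ` this is the claimed bound with `C = (n!)² Kⁿ`.
-/

open Nat

variable {𝕜 : Type*} [NontriviallyNormedField 𝕜]

theorem norm_iteratedDeriv_inv_le (i : ℕ) {y : 𝕜} (hy : 1 ≤ ‖y‖) :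
    ‖iteratedDeriv i (·⁻¹) y‖ ≤ i ! := by
  have hinv : (fun y : 𝕜 ↦ y⁻¹) = fun y ↦ y ^ (-1 : ℤ) := by simp
  have hcoeff : ‖∏ j ∈ Finset.range i, (((-1 : ℤ) : 𝕜) - j)‖ ≤ i ! := by
    rw [norm_prod, ← Finset.prod_range_add_one_eq_factorial, Nat.cast_prod]
    refine Finset.prod_le_prod (fun _ _ ↦ norm_nonneg _) fun j _ ↦ ?_
    calc ‖((-1 : ℤ) : 𝕜) - j‖ = ‖((j + 1 : ℕ) : 𝕜)‖ := by
          rw [← norm_neg]; push_cast; ring_nf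
      _ ≤ _ := by simpa using Nat.norm_cast_le (α := 𝕜) (j + 1)
  have hpow : ‖y ^ ((-1 : ℤ) - i)‖ ≤ 1 := by
    rw [norm_zpow]; exact zpow_le_one_of_nonpos₀ hy (by omega)
  rw [hinv, iteratedDeriv_eq_iterate, iter_deriv_zpow, norm_mul]
  simpa using mul_le_mul hcoeff hpow (norm_nonneg _) (by positivity)

theorem norm_iteratedDeriv_inv_comp_le {n : ℕ} {f : 𝕜 → 𝕜} (hf : ContDiff 𝕜 n f) {x : 𝕜}
    (hx : 1 ≤ ‖f x‖) {D : ℝ} (hD : ∀ i, 1 ≤ i → i ≤ n → ‖iteratedDeriv i f x‖ ≤ D ^ i) :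
    ‖iteratedDeriv n (fun s ↦ (f s)⁻¹) x‖ ≤ n ! * n ! * D ^ n := by
  set U := f ⁻¹' {0}ᶜ
  have hU : IsOpen U := isOpen_compl_singleton.preimage hf.continuous
  have hxU : x ∈ U := norm_pos_iff.mp (one_pos.trans_le hx)
  have hderiv : ∀ {g : 𝕜 → 𝕜} {s : Set 𝕜} (i : ℕ), IsOpen s → ∀ y ∈ s,
      ‖iteratedFDerivWithin 𝕜 i g s y‖ = ‖iteratedDeriv i g y‖ := fun i hs y hy ↦ by
    rw [norm_iteratedFDerivWithin_eq_norm_iteratedDerivWithin, iteratedDerivWithin_of_isOpen hs hy]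
  have key := norm_iteratedFDerivWithin_comp_le (contDiffOn_inv 𝕜) hf.contDiffOn le_rfl
    isOpen_compl_singleton.uniqueDiffOn hU.uniqueDiffOn (fun _ hy ↦ hy) hxU
    (C := n !) (D := D)
    (fun i hi ↦ by
      rw [hderiv i isOpen_compl_singleton _ hxU]
      exact (norm_iteratedDeriv_inv_le i hx).trans (mod_cast Nat.factorial_le hi))
    (fun i h1 hi ↦ by rw [hderiv i hU _ hxU]; exact hD i h1 hi)
  rwa [hderiv n hU _ hxU] at key

theorem norm_iteratedDeriv_inv_comp_le_div {n : ℕ} {f : 𝕜 → 𝕜} (hf : ContDiff 𝕜 n f) {x : 𝕜}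
    {c : ℝ} (hc : 0 < c) (hx : c ≤ ‖f x‖) {D : ℝ}
    (hD : ∀ i, 1 ≤ i → i ≤ n → ‖iteratedDeriv i f x‖ ≤ c * D ^ i) :
    ‖iteratedDeriv n (fun s ↦ (f s)⁻¹) x‖ ≤ n ! * n ! * D ^ n / c := by
  have hfx : 0 < ‖f x‖ := hc.trans_le hx
  have hnorm := norm_iteratedDeriv_inv_comp_le (f := fun s ↦ (f x)⁻¹ * f s)
    (contDiff_const.mul hf) (x := x) (D := D) (by simp [hfx.ne']) fun i h1 hi ↦ by
      rw [iteratedDeriv_const_mul_field, norm_mul, norm_inv, inv_mul_le_iff₀ hfx]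
      have hDi : 0 ≤ D ^ i := nonneg_of_mul_nonneg_right ((norm_nonneg _).trans (hD i h1 hi)) hc
      exact (hD i h1 hi).trans (by gcongr)
  simp only [mul_inv, inv_inv, iteratedDeriv_const_mul_field, norm_mul] at hnorm
  rw [le_div_iff₀ hc]
  calc ‖iteratedDeriv n (fun s ↦ (f s)⁻¹) x‖ * c
      ≤ ‖f x‖ * ‖iteratedDeriv n (fun s ↦ (f s)⁻¹) x‖ := by rw [mul_comm]; gcongr
    _ ≤ n ! * n ! * D ^ n := hnorm

theorem reciprocal_iterated_deriv_bound (n : ℕ) (K : ℝ) (hK : 1 ≤ K) :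
    ∃ C > 0, ∀ (Φ : ℝ → ℝ) (α β δ c : ℝ), 0 < δ → β - α = δ → 0 < c →
      ContDiff ℝ n Φ →
      (∀ t ∈ Set.Icc α β, c ≤ |Φ t|) →
      (∀ t ∈ Set.Icc α β, ∀ j : ℕ, 1 ≤ j → j ≤ n →
        |iteratedDeriv j Φ t| ≤ K * c * δ ^ (-(j : ℤ))) →
      ∀ t ∈ Set.Icc α β,
        |iteratedDeriv n (fun s => (Φ s)⁻¹) t| ≤ C * c⁻¹ * δ ^ (-(n : ℤ)) := by
  refine ⟨n ! * n ! * K ^ n, by positivity, ?_⟩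
  intro Φ α β δ c hδ _ hc hΦ hlow hup t ht
  have hD : ∀ i, 1 ≤ i → i ≤ n → ‖iteratedDeriv i Φ t‖ ≤ c * (K / δ) ^ i := fun i h1 hi ↦
    calc ‖iteratedDeriv i Φ t‖ ≤ K * c * δ ^ (-(i : ℤ)) := hup t ht i h1 hi
      _ ≤ K ^ i * c * δ ^ (-(i : ℤ)) := by gcongr; exact le_self_pow₀ hK (by omega)
      _ = c * (K / δ) ^ i := by rw [zpow_neg, zpow_natCast, div_pow]; ring
  calc |iteratedDeriv n (fun s => (Φ s)⁻¹) t|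
      ≤ n ! * n ! * (K / δ) ^ n / c :=
        norm_iteratedDeriv_inv_comp_le_div hΦ hc (hlow t ht) hD
    _ = n ! * n ! * K ^ n * c⁻¹ * δ ^ (-(n : ℤ)) := by
        rw [zpow_neg, zpow_natCast, div_pow]; ring
end
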